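/- arXiv:1804.05740 — 6 statements merged into one kernel-verified Lean document; each statement's English description precedes it below -/
import Mathlib

section
/- The Poisson transform P, mapping a finite signed measure μ on [0,∞) to the sequence k ↦ ∫_0^∞ (x^k/k!) e^{-x} dμ(x), is injective: if Pμ = 0 then μ = 0. -/
/-!
Tilting by `e^{-x}`, the measures `ν± = e^{-x} μ±` have exponential moments on `(-∞, 1)`, and
`k! Pμ±(k)` are the moments `∫ x^k dν±`. A finite measure on `ℝ` whose moment-generating
function is finite near `0` is determined by its moments: the complex moment-generating
function is analytic on a vertical strip around the imaginary axis, its Taylor coefficients at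
`0` are the moments, so by the identity theorem it is determined on the imaginary axis, where it
is the characteristic function. Hence `ν+ = ν-`, and undoing the tilt gives `μ+ = μ-`.
-/

open MeasureTheory ProbabilityTheory Filter Topology Real

namespace ProbabilityTheory

variable {Ω : Type*} {m : MeasurableSpace Ω} {X : Ω → ℝ} {μ : Measure Ω}

lemma iteratedDeriv_complexMGF_zero (h : 0 ∈ interior (integrableExpSet X μ)) (n : ℕ) :
    iteratedDeriv n (complexMGF X μ) 0 = ((μ[fun ω ↦ X ω ^ n] : ℝ) : ℂ) := by
  rw [iteratedDeriv_complexMGF (by simpa using h)]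
  simp only [zero_mul, Complex.exp_zero, mul_one]
  exact_mod_cast integral_complex_ofReal

lemma complexMGF_eventuallyEq_of_integral_pow_eq {Ω' : Type*} {mΩ' : MeasurableSpace Ω'}
    {Y : Ω' → ℝ} {μ' : Measure Ω'}
    (hX : 0 ∈ interior (integrableExpSet X μ)) (hY : 0 ∈ interior (integrableExpSet Y μ'))
    (h : ∀ n : ℕ, μ[fun ω ↦ X ω ^ n] = μ'[fun ω ↦ Y ω ^ n]) :
    complexMGF X μ =ᶠ[𝓝 0] complexMGF Y μ' := by
  set U := {z : ℂ | z.re ∈ interior (integrableExpSet X μ) ∩ interior (integrableExpSet Y μ')}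
  have hU : IsOpen U := (isOpen_interior.inter isOpen_interior).preimage Complex.continuous_re
  obtain ⟨r, hr, hball⟩ := Metric.isOpen_iff.1 hU 0 (by simpa [U] using ⟨hX, hY⟩)
  have hXd : DifferentiableOn ℂ (complexMGF X μ) (Metric.ball 0 r) :=
    differentiableOn_complexMGF.mono fun z hz ↦ (hball hz).1
  have hYd : DifferentiableOn ℂ (complexMGF Y μ') (Metric.ball 0 r) :=
    differentiableOn_complexMGF.mono fun z hz ↦ (hball hz).2
  filter_upwards [Metric.ball_mem_nhds 0 hr] with z hz
  rw [← Complex.taylorSeries_eq_on_ball hXd hz, ← Complex.taylorSeries_eq_on_ball hYd hz]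
  simp_rw [iteratedDeriv_complexMGF_zero hX, iteratedDeriv_complexMGF_zero hY, h]

section Tilt

variable {μ : Measure ℝ}

lemma Iic_zero_subset_integrableExpSet [IsFiniteMeasure μ] (hμ : ∀ᵐ x ∂μ, 0 ≤ x) :
    Set.Iic 0 ⊆ integrableExpSet id μ := fun t ht ↦
  Integrable.of_bound (by fun_prop) 1 <| hμ.mono fun x hx ↦ by
    simpa [abs_of_pos (exp_pos _)] using mul_nonpos_of_nonpos_of_nonneg ht hx

lemma mem_integrableExpSet_withDensity_exp_iff (s t : ℝ) :
    t ∈ integrableExpSet id (μ.withDensity fun x ↦ ENNReal.ofReal (exp (s * x))) ↔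
      t + s ∈ integrableExpSet id μ := by
  simp only [integrableExpSet, Set.mem_ofPred_eq, id]
  rw [integrable_withDensity_iff_integrable_smul' (by fun_prop) (by simp)]
  simp only [ENNReal.toReal_ofReal (exp_pos _).le, smul_eq_mul, ← exp_add, add_mul, add_comm]

lemma isFiniteMeasure_withDensity_exp {s : ℝ} (hs : s ∈ integrableExpSet id μ) :
    IsFiniteMeasure (μ.withDensity fun x ↦ ENNReal.ofReal (exp (s * x))) :=
  isFiniteMeasure_withDensity_ofReal hs.hasFiniteIntegral

lemma integral_withDensity_exp (s : ℝ) (g : ℝ → ℝ) :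
    ∫ x, g x ∂(μ.withDensity fun x ↦ ENNReal.ofReal (exp (s * x))) =
      ∫ x, exp (s * x) * g x ∂μ := by
  rw [integral_withDensity_eq_integral_toReal_smul (by fun_prop) (by simp)]
  simp only [ENNReal.toReal_ofReal (exp_pos _).le, smul_eq_mul]

lemma zero_mem_interior_integrableExpSet_withDensity_exp [IsFiniteMeasure μ]
    (hμ : ∀ᵐ x ∂μ, 0 ≤ x) {s : ℝ} (hs : s < 0) :
    0 ∈ interior (integrableExpSet id (μ.withDensity fun x ↦ ENNReal.ofReal (exp (s * x)))) := by
  have hsub : Set.Iio (-s) ⊆ integrableExpSet id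
      (μ.withDensity fun x ↦ ENNReal.ofReal (exp (s * x))) := fun t ht ↦ by
    rw [mem_integrableExpSet_withDensity_exp_iff]
    exact Iic_zero_subset_integrableExpSet hμ (Set.mem_Iic.2 (by linarith [Set.mem_Iio.1 ht]))
  exact interior_mono hsub (by rw [isOpen_Iio.interior_eq]; exact neg_pos.2 hs)

end Tilt

end ProbabilityTheory

namespace MeasureTheory.Measure

lemma withDensity_ofReal_exp_injective {α : Type*} [MeasurableSpace α] {f : α → ℝ}
    (hf : Measurable f) :
    Function.Injective fun μ : Measure α ↦ μ.withDensity fun x ↦ ENNReal.ofReal (exp (f x)) := by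
  intro μ μ' h
  have hdens : Measurable fun x ↦ ENNReal.ofReal (exp (f x)) := by fun_prop
  calc μ = _ := (withDensity_inv_same hdens (by simp [exp_pos]) (by simp)).symm
    _ = _ := by simp only at h; rw [h]
    _ = μ' := withDensity_inv_same hdens (by simp [exp_pos]) (by simp)

theorem ext_of_integral_pow_eq {μ μ' : Measure ℝ} [IsFiniteMeasure μ] [IsFiniteMeasure μ']
    (hμ : 0 ∈ interior (integrableExpSet id μ)) (hμ' : 0 ∈ interior (integrableExpSet id μ'))
    (h : ∀ n : ℕ, ∫ x, x ^ n ∂μ = ∫ x, x ^ n ∂μ') :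
    μ = μ' := by
  set U := {z : ℂ | z.re ∈ interior (integrableExpSet id μ) ∩ interior (integrableExpSet id μ')}
  have hU : IsPreconnected U :=
    ((convex_integrableExpSet.interior.inter convex_integrableExpSet.interior).linear_preimage
      Complex.reLm).isPreconnected
  have hF : AnalyticOnNhd ℂ (complexMGF id μ) U := analyticOnNhd_complexMGF.mono fun z hz ↦ hz.1
  have hF' : AnalyticOnNhd ℂ (complexMGF id μ') U :=
    analyticOnNhd_complexMGF.mono fun z hz ↦ hz.2
  have hEq := hF.eqOn_of_preconnected_of_eventuallyEq hF' hU (by simpa [U] using ⟨hμ, hμ'⟩)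
    (complexMGF_eventuallyEq_of_integral_pow_eq hμ hμ' h)
  refine ext_of_charFun (funext fun t ↦ ?_)
  rw [← complexMGF_id_mul_I, ← complexMGF_id_mul_I]
  exact hEq (by simpa [U] using ⟨hμ, hμ'⟩)

end MeasureTheory.Measure

/-- The Poisson transform, sending a finite signed measure `μ = μp - μn` on `[0,∞)` to the
sequence `k ↦ ∫ x^k/k! e^{-x} dμ(x)`, is injective: if `Pμ = 0` then `μ = 0`. -/
theorem poisson_transform_injective
    (μp μn : Measure ℝ) [IsFiniteMeasure μp] [IsFiniteMeasure μn]
    (hp : μp (Set.Iio 0) = 0) (hn : μn (Set.Iio 0) = 0)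
    (h : ∀ k : ℕ,
      (∫ x, x ^ k / (Nat.factorial k) * Real.exp (-x) ∂μp)
        = ∫ x, x ^ k / (Nat.factorial k) * Real.exp (-x) ∂μn) :
    μp = μn := by
  have hp' : ∀ᵐ x ∂μp, 0 ≤ x := ae_iff.2 (by simp only [not_le]; exact hp)
  have hn' : ∀ᵐ x ∂μn, 0 ≤ x := ae_iff.2 (by simp only [not_le]; exact hn)
  have hmoment (μ : Measure ℝ) (k : ℕ) :
      ∫ x, Real.exp (-1 * x) * x ^ k ∂μ =
        k.factorial * ∫ x, x ^ k / (Nat.factorial k) * Real.exp (-x) ∂μ := by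
    rw [← integral_const_mul]
    congr with x
    field_simp
  have hexp : (-1 : ℝ) ∈ Set.Iic 0 := by norm_num
  have := isFiniteMeasure_withDensity_exp (Iic_zero_subset_integrableExpSet hp' hexp)
  have := isFiniteMeasure_withDensity_exp (Iic_zero_subset_integrableExpSet hn' hexp)
  refine Measure.withDensity_ofReal_exp_injective (f := fun x ↦ -1 * x) (by fun_prop) ?_
  refine Measure.ext_of_integral_pow_eq
    (zero_mem_interior_integrableExpSet_withDensity_exp hp' (by norm_num))
    (zero_mem_interior_integrableExpSet_withDensity_exp hn' (by norm_num)) fun k ↦ ?_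
  rw [integral_withDensity_exp, integral_withDensity_exp, hmoment, hmoment, h]
end

section
/- Let H ∈ ℝ^{n×n} be an irreducible matrix with nonnegative off-diagonal entries and columns summing to zero (H_{i,j} = r_{j,i} ≥ 0 for i ≠ j, H_{i,i} = −∑_{j≠i} r_{i,j}). Then 0 is a simple eigenvalue of H and every other eigenvalue of H has strictly negative real part. -/
/-!
Let `A = Hᵀ`, a matrix with nonnegative off-diagonal entries and zero row sums. By Gershgorin,
every eigenvalue of `A` lies in a disc `‖μ - A k k‖ ≤ -A k k` centred on the nonpositive real axis
and touching the imaginary axis only at `0`. For the multiplicity of `0`, a maximum principle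
does the work: at a maximal coordinate `i` of a real vector `x`, `(A x) i = ∑ j, A i j (x j - x i)`
is a sum of nonpositive terms. Hence `A x = 0` forces `x` to be constant along every edge leaving
a maximal coordinate, so constant by irreducibility, and `A x` is never a nonzero constant.
Complex vectors reduce to their real and imaginary parts, `A` being real.
Thus `ker A² = ker A` is spanned by the all-ones vector and `0` has algebraic multiplicity one.
-/

open Matrix Polynomial Finset

/-- The generator (Q-matrix) of a continuous-time Markov chain, in the row convention;
the matrix `H` of `rate_matrix_spectrum` is the transpose of one. -/
structure Matrix.IsRateMatrix {ι : Type*} [Fintype ι] (A : Matrix ι ι ℝ) : Prop where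
  nonneg_of_ne {i j : ι} : i ≠ j → 0 ≤ A i j
  sum_row_eq_zero (i : ι) : ∑ j, A i j = 0

theorem Complex.re_neg_of_norm_sub_ofReal_le {μ : ℂ} {c : ℝ} (h : ‖μ - c‖ ≤ -c) (hμ : μ ≠ 0) :
    μ.re < 0 := by
  have hsq : (μ.re - c) ^ 2 + μ.im ^ 2 ≤ c ^ 2 := by
    have := Complex.sq_norm (μ - c)
    simp only [normSq_apply, sub_re, ofReal_re, sub_im, ofReal_im, sub_zero] at this
    nlinarith [norm_nonneg (μ - c)]
  have hc : c ≤ 0 := by linarith [norm_nonneg (μ - c)]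
  by_contra! hre
  refine hμ (Complex.normSq_eq_zero.mp (le_antisymm ?_ (normSq_nonneg μ)))
  rw [normSq_apply]
  nlinarith [mul_nonpos_of_nonneg_of_nonpos hre hc]

theorem Module.End.maxGenEigenspace_zero_eq_ker {R M : Type*} [CommRing R] [AddCommGroup M]
    [Module R M] {f : Module.End R M} (h : ∀ x, f (f x) = 0 → f x = 0) :
    f.maxGenEigenspace 0 = LinearMap.ker f := by
  have hpow : ∀ k x, (f ^ k) x = 0 → f x = 0 := by
    intro k
    induction k with
    | zero => intro x hx; simp_all
    | succ k ih => intro x hx; exact h x (ih (f x) (by rwa [pow_succ, Module.End.mul_apply] at hx))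
  ext x
  simp only [Module.End.mem_maxGenEigenspace, zero_smul, sub_zero, LinearMap.mem_ker]
  exact ⟨fun ⟨k, hk⟩ => hpow k x hk, fun hx => ⟨1, by simpa using hx⟩⟩

namespace Matrix

variable {m n : Type*} [Fintype n]

theorem re_map_ofReal_mulVec (A : Matrix m n ℝ) (v : n → ℂ) (i : m) :
    (((A.map (↑) : Matrix m n ℂ) *ᵥ v) i).re = (A *ᵥ fun j => (v j).re) i := by
  simp [mulVec, dotProduct, Complex.re_sum]

theorem im_map_ofReal_mulVec (A : Matrix m n ℝ) (v : n → ℂ) (i : m) :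
    (((A.map (↑) : Matrix m n ℂ) *ᵥ v) i).im = (A *ᵥ fun j => (v j).im) i := by
  simp [mulVec, dotProduct, Complex.im_sum]

end Matrix

namespace Matrix.IsRateMatrix

variable {ι : Type*} [Fintype ι] {A : Matrix ι ι ℝ}

theorem sum_erase_eq_neg_diag [DecidableEq ι] (hA : A.IsRateMatrix) (i : ι) :
    ∑ j ∈ univ.erase i, A i j = -A i i := by
  rw [eq_neg_iff_add_eq_zero, sum_erase_add _ _ (mem_univ i), hA.sum_row_eq_zero]

theorem mulVec_apply_eq_sum_mul_sub (hA : A.IsRateMatrix) (x : ι → ℝ) (i : ι) :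
    (A *ᵥ x) i = ∑ j, A i j * (x j - x i) := by
  simp only [mulVec, dotProduct, mul_sub, sum_sub_distrib, ← sum_mul, hA.sum_row_eq_zero,
    zero_mul, sub_zero]

theorem mul_sub_nonpos_of_forall_le (hA : A.IsRateMatrix) {x : ι → ℝ} {i : ι}
    (hi : ∀ j, x j ≤ x i) (j : ι) : A i j * (x j - x i) ≤ 0 := by
  rcases eq_or_ne i j with rfl | hij
  · simp
  · exact mul_nonpos_of_nonneg_of_nonpos (hA.nonneg_of_ne hij) (sub_nonpos.mpr (hi j))

theorem mulVec_apply_nonpos_of_forall_le (hA : A.IsRateMatrix) {x : ι → ℝ} {i : ι}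
    (hi : ∀ j, x j ≤ x i) : (A *ᵥ x) i ≤ 0 := by
  rw [hA.mulVec_apply_eq_sum_mul_sub]
  exact sum_nonpos fun j _ => hA.mul_sub_nonpos_of_forall_le hi j

theorem eq_of_forall_le_of_mulVec_apply_eq_zero (hA : A.IsRateMatrix) {x : ι → ℝ} {i j : ι}
    (hi : ∀ k, x k ≤ x i) (hx : (A *ᵥ x) i = 0) (hij : 0 < A i j) : x j = x i := by
  rw [hA.mulVec_apply_eq_sum_mul_sub] at hx
  have := (sum_eq_zero_iff_of_nonpos fun k _ => hA.mul_sub_nonpos_of_forall_le hi k).mp hx j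
    (mem_univ j)
  linarith [(mul_eq_zero.mp this).resolve_left hij.ne']

theorem eq_of_mulVec_eq_zero (hA : A.IsRateMatrix)
    (hirr : ∀ i j, i ≠ j → Relation.TransGen (fun a b => 0 < A a b) i j) {x : ι → ℝ}
    (hx : A *ᵥ x = 0) (i j : ι) : x i = x j := by
  have : Nonempty ι := ⟨i⟩
  obtain ⟨m, hm⟩ := Finite.exists_max x
  have hreach : ∀ k, Relation.TransGen (fun a b => 0 < A a b) m k → x k = x m := by
    intro k hk
    induction hk with
    | single hmk => exact hA.eq_of_forall_le_of_mulVec_apply_eq_zero hm (congrFun hx m) hmk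
    | tail _ hab ih =>
      exact (hA.eq_of_forall_le_of_mulVec_apply_eq_zero (ih ▸ hm) (congrFun hx _) hab).trans ih
  have hconst : ∀ k, x k = x m := fun k => by
    rcases eq_or_ne m k with rfl | hmk
    · rfl
    · exact hreach k (hirr m k hmk)
  rw [hconst i, hconst j]

theorem eq_zero_of_mulVec_eq_const [Nonempty ι] (hA : A.IsRateMatrix) {x : ι → ℝ} {a : ℝ}
    (hx : A *ᵥ x = fun _ => a) : a = 0 := by
  obtain ⟨i, hi⟩ := Finite.exists_max x
  obtain ⟨j, hj⟩ := Finite.exists_max (-x)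
  have hle : a ≤ 0 := congrFun hx i ▸ hA.mulVec_apply_nonpos_of_forall_le hi
  have hge : -a ≤ 0 := by
    have := hA.mulVec_apply_nonpos_of_forall_le hj
    rwa [mulVec_neg, hx] at this
  linarith

theorem eq_of_map_ofReal_mulVec_eq_zero (hA : A.IsRateMatrix)
    (hirr : ∀ i j, i ≠ j → Relation.TransGen (fun a b => 0 < A a b) i j) {v : ι → ℂ}
    (hv : A.map (↑) *ᵥ v = 0) (i j : ι) : v i = v j := by
  refine Complex.ext (hA.eq_of_mulVec_eq_zero hirr (x := fun k => (v k).re) ?_ i j)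
    (hA.eq_of_mulVec_eq_zero hirr (x := fun k => (v k).im) ?_ i j)
  · ext k; simp [← re_map_ofReal_mulVec, hv]
  · ext k; simp [← im_map_ofReal_mulVec, hv]

theorem eq_zero_of_map_ofReal_mulVec_eq_const [Nonempty ι] (hA : A.IsRateMatrix) {v : ι → ℂ}
    {c : ℂ} (hv : A.map (↑) *ᵥ v = fun _ => c) : c = 0 := by
  refine Complex.ext (hA.eq_zero_of_mulVec_eq_const (x := fun j => (v j).re) ?_)
    (hA.eq_zero_of_mulVec_eq_const (x := fun j => (v j).im) ?_)
  · ext k; rw [← re_map_ofReal_mulVec, hv]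
  · ext k; rw [← im_map_ofReal_mulVec, hv]

variable [DecidableEq ι]

theorem ker_toLin'_map_ofReal (hA : A.IsRateMatrix)
    (hirr : ∀ i j, i ≠ j → Relation.TransGen (fun a b => 0 < A a b) i j) :
    LinearMap.ker (toLin' (A.map (↑) : Matrix ι ι ℂ)) = ℂ ∙ fun _ => 1 := by
  apply le_antisymm
  · intro v hv
    rw [LinearMap.mem_ker, toLin'_apply] at hv
    rcases isEmpty_or_nonempty ι with hι | ⟨⟨i⟩⟩
    · simp [Subsingleton.elim v 0]
    · exact Submodule.mem_span_singleton.mpr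
        ⟨v i, funext fun j => by simp [hA.eq_of_map_ofReal_mulVec_eq_zero hirr hv i j]⟩
  · rw [Submodule.span_singleton_le_iff_mem, LinearMap.mem_ker, toLin'_apply]
    ext i
    simp [mulVec, dotProduct, ← Complex.ofReal_sum, hA.sum_row_eq_zero]

theorem rootMultiplicity_zero_charpoly_map_ofReal [Nonempty ι] (hA : A.IsRateMatrix)
    (hirr : ∀ i j, i ≠ j → Relation.TransGen (fun a b => 0 < A a b) i j) :
    (A.map (↑) : Matrix ι ι ℂ).charpoly.rootMultiplicity 0 = 1 := by
  set f := toLin' (A.map (↑) : Matrix ι ι ℂ)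
  have hker_sq : ∀ x, f (f x) = 0 → f x = 0 := by
    intro x hx
    obtain ⟨i⟩ := ‹Nonempty ι›
    have hconst : f x = fun _ => f x i :=
      funext fun j => hA.eq_of_map_ofReal_mulVec_eq_zero hirr hx j i
    rw [hconst, hA.eq_zero_of_map_ofReal_mulVec_eq_const hconst]
    rfl
  rw [← charpoly_toLin', ← LinearMap.finrank_maxGenEigenspace_eq,
    Module.End.maxGenEigenspace_zero_eq_ker hker_sq, hA.ker_toLin'_map_ofReal hirr]
  exact finrank_span_singleton one_ne_zero

theorem re_neg_of_isRoot_charpoly_map_ofReal (hA : A.IsRateMatrix) {μ : ℂ}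
    (hμ : (A.map (↑) : Matrix ι ι ℂ).charpoly.IsRoot μ) (hμ0 : μ ≠ 0) : μ.re < 0 := by
  obtain ⟨k, hk⟩ := eigenvalue_mem_ball (A := (A.map (↑) : Matrix ι ι ℂ))
    ((Module.End.hasEigenvalue_iff_isRoot_charpoly _ _).mpr (by rwa [charpoly_toLin']))
  rw [Metric.mem_closedBall, dist_eq_norm] at hk
  refine Complex.re_neg_of_norm_sub_ofReal_le (c := A k k) (hk.trans_eq ?_) hμ0
  simp only [map_apply, Complex.norm_real, Real.norm_eq_abs]
  rw [sum_congr rfl fun j hj => abs_of_nonneg (hA.nonneg_of_ne (ne_of_mem_erase hj).symm),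
    hA.sum_erase_eq_neg_diag]

end Matrix.IsRateMatrix

/-- For an irreducible transition-rate matrix `H` (nonnegative off-diagonal entries, columns
summing to zero, strongly connected rate graph), `0` is a simple eigenvalue of `H` and every
other eigenvalue has strictly negative real part. Eigenvalues are the roots of the
characteristic polynomial of `H` viewed as a complex matrix. -/
theorem rate_matrix_spectrum
    (n : ℕ) (hn : 0 < n) (H : Matrix (Fin n) (Fin n) ℝ)
    (hoff : ∀ i j, i ≠ j → 0 ≤ H i j)
    (hcol : ∀ j, ∑ i, H i j = 0)
    (hirr : ∀ i j : Fin n, i ≠ j → Relation.TransGen (fun a b => 0 < H b a) i j) :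
    Polynomial.rootMultiplicity 0 (H.map (Complex.ofReal ·)).charpoly = 1
    ∧ ∀ μ : ℂ, (H.map (Complex.ofReal ·)).charpoly.IsRoot μ → μ ≠ 0 → μ.re < 0 := by
  have hA : Hᵀ.IsRateMatrix := ⟨fun hij => hoff _ _ hij.symm, hcol⟩
  have : Nonempty (Fin n) := ⟨⟨0, hn⟩⟩
  rw [← charpoly_transpose, ← transpose_map]
  exact ⟨hA.rootMultiplicity_zero_charpoly_map_ofReal hirr,
    fun μ => hA.re_neg_of_isRoot_charpoly_map_ofReal⟩
end

section
/- Let H be an irreducible transition-rate matrix (transpose of an irreducible generator) as above, and for i ∈ {1,…,n} let H_{\{i\}} be the principal submatrix obtained by deleting the i-th row and column of H. Then every eigenvalue of H_{\{i\}} has strictly negative real part; in particular det(H_{\{i\}}) ≠ 0. -/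
/-!
Let `μ` be an eigenvalue of `H_{i}` with `0 ≤ re μ` and `v` a left eigenvector. Gershgorin's
argument at column `j` gives `0 ≤ ∑ k, H_{i} k j * ‖v k‖`, so `u = |v|`, extended by `0` at the
deleted state `i`, is subharmonic for the generator `Hᵀ` at every state but `i`. As the
columns of `H` sum to zero, the maximum of such a `u` spreads along every positive rate, hence by
irreducibility to `i`, where `u` vanishes although its maximum is positive. In particular `0` is
not an eigenvalue, so `det H_{i} ≠ 0`.
-/

open Finset Polynomial

namespace Matrix

theorem exists_vecMul_eq_smul_of_isRoot_charpoly {ι K : Type*} [Fintype ι] [DecidableEq ι]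
    [Field K] {A : Matrix ι ι K} {μ : K} (h : A.charpoly.IsRoot μ) :
    ∃ v ≠ 0, v ᵥ* A = μ • v := by
  obtain ⟨v, hv0, hv⟩ := exists_vecMul_eq_zero_iff.mpr (A.eval_charpoly μ ▸ h.eq_zero)
  refine ⟨v, hv0, ?_⟩
  rwa [vecMul_sub, sub_eq_zero, scalar_apply, vecMul_diagonal_const, op_smul_eq_smul,
    eq_comm] at hv

theorem isRoot_charpoly_zero_of_det_eq_zero {ι K : Type*} [Fintype ι] [DecidableEq ι]
    [Field K] {A : Matrix ι ι K} (h : A.det = 0) : A.charpoly.IsRoot 0 := by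
  rw [IsRoot, ← coeff_zero_eq_eval_zero]
  simpa [det_eq_sign_charpoly_coeff] using h

variable {ι : Type*} [Fintype ι]

theorem sum_mul_norm_nonneg_of_vecMul_eq_smul [DecidableEq ι] {B : Matrix ι ι ℝ}
    (hoff : ∀ k j, k ≠ j → 0 ≤ B k j) {v : ι → ℂ} {μ : ℂ} (hμ : 0 ≤ μ.re)
    (hv : v ᵥ* B.map (↑) = μ • v) (j : ι) : 0 ≤ ∑ k, B k j * ‖v k‖ := by
  have hshift : (μ - B j j) * v j = ∑ k ∈ univ.erase j, B k j * v k := by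
    have := congrFun hv j
    simp only [vecMul, dotProduct, map_apply, Pi.smul_apply, smul_eq_mul, mul_comm (v _)] at this
    rw [← add_sum_erase _ _ (mem_univ j)] at this
    linear_combination -this
  have hnorm : ‖μ - B j j‖ * ‖v j‖ ≤ ∑ k ∈ univ.erase j, B k j * ‖v k‖ := calc
    _ = ‖(μ - B j j) * v j‖ := (norm_mul _ _).symm
    _ ≤ ∑ k ∈ univ.erase j, ‖(B k j : ℂ) * v k‖ := hshift ▸ norm_sum_le _ _
    _ = _ := sum_congr rfl fun k hk => by
      rw [norm_mul, Complex.norm_real, Real.norm_of_nonneg (hoff k j (ne_of_mem_erase hk))]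
  have hre : -B j j ≤ ‖μ - B j j‖ := by
    have := Complex.re_le_norm (μ - B j j)
    rw [Complex.sub_re, Complex.ofReal_re] at this
    linarith
  rw [← add_sum_erase _ _ (mem_univ j)]
  nlinarith [norm_nonneg (v j)]

theorem eq_of_pos_of_sum_mul_nonneg {H : Matrix ι ι ℝ} (hoff : ∀ k j, k ≠ j → 0 ≤ H k j)
    {j : ι} (hcol : ∑ k, H k j = 0) {u : ι → ℝ} {M : ℝ} (hle : ∀ k, u k ≤ M) (hj : u j = M)
    (hsub : 0 ≤ ∑ k, H k j * u k) {k : ι} (hkj : 0 < H k j) : u k = M := by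
  have hterm : ∀ x ∈ univ, H x j * (u x - M) ≤ 0 := fun x _ => by
    rcases eq_or_ne x j with rfl | hx
    · simp [hj]
    · exact mul_nonpos_of_nonneg_of_nonpos (hoff x j hx) (by linarith [hle x])
  have hsum : ∑ x, H x j * (u x - M) = 0 := by
    refine le_antisymm (sum_nonpos hterm) ?_
    simpa [mul_sub, sum_sub_distrib, ← sum_mul, hcol] using hsub
  have := (sum_eq_zero_iff_of_nonpos hterm).mp hsum k (mem_univ k)
  linarith [(mul_eq_zero.mp this).resolve_left hkj.ne']

theorem eq_of_transGen_of_sum_mul_nonneg {H : Matrix ι ι ℝ} (hoff : ∀ k j, k ≠ j → 0 ≤ H k j)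
    (hcol : ∀ j, ∑ k, H k j = 0) {u : ι → ℝ} {M : ℝ} (hle : ∀ k, u k ≤ M)
    (hsub : ∀ j, u j = M → 0 ≤ ∑ k, H k j * u k) {a b : ι}
    (hab : Relation.TransGen (fun a b => 0 < H b a) a b) (ha : u a = M) : u b = M := by
  induction hab with
  | single h => exact eq_of_pos_of_sum_mul_nonneg hoff (hcol _) hle ha (hsub _ ha) h
  | tail _ h ih => exact eq_of_pos_of_sum_mul_nonneg hoff (hcol _) hle ih (hsub _ ih) h

end Matrix

open Matrix

/-- For an irreducible transition-rate matrix `H` on `n = N+1` states, every eigenvalue of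
the principal submatrix `H_{\{i\}}` (delete the `i`-th row and column) has strictly negative
real part; in particular `det H_{\{i\}} ≠ 0`. -/
theorem rate_matrix_principal_submatrix_spectrum
    (N : ℕ) (H : Matrix (Fin (N + 1)) (Fin (N + 1)) ℝ)
    (hoff : ∀ i j, i ≠ j → 0 ≤ H i j)
    (hcol : ∀ j, ∑ i, H i j = 0)
    (hirr : ∀ i j : Fin (N + 1), i ≠ j → Relation.TransGen (fun a b => 0 < H b a) i j)
    (i : Fin (N + 1)) :
    (∀ μ : ℂ,
        ((H.submatrix i.succAbove i.succAbove).map (Complex.ofReal ·)).charpoly.IsRoot μ →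
        μ.re < 0)
    ∧ (H.submatrix i.succAbove i.succAbove).det ≠ 0 := by
  set B := H.submatrix i.succAbove i.succAbove
  have hspec : ∀ μ : ℂ, (B.map (Complex.ofReal ·)).charpoly.IsRoot μ → μ.re < 0 := by
    intro μ hμ
    by_contra! hre
    obtain ⟨v, hv0, hv⟩ := exists_vecMul_eq_smul_of_isRoot_charpoly hμ
    obtain ⟨j, hj⟩ := Function.ne_iff.mp hv0
    obtain ⟨j₀, -, hmax⟩ := exists_max_image univ (‖v ·‖) ⟨j, mem_univ j⟩
    have hM : 0 < ‖v j₀‖ := (norm_pos_iff.2 hj).trans_le (hmax j (mem_univ j))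
    set u : Fin (N + 1) → ℝ := i.insertNth 0 (‖v ·‖)
    have hle : ∀ x, u x ≤ ‖v j₀‖ := fun x => by
      rcases i.eq_self_or_eq_succAbove x with rfl | ⟨k, rfl⟩
      · simp [u]
      · simpa [u] using hmax k (mem_univ k)
    have hsub : ∀ x, u x = ‖v j₀‖ → 0 ≤ ∑ y, H y x * u y := fun x hx => by
      rcases i.eq_self_or_eq_succAbove x with rfl | ⟨k, rfl⟩
      · simp only [u, Fin.insertNth_apply_same] at hx
        linarith
      · rw [Fin.sum_univ_succAbove _ i]
        simpa [u, B] using sum_mul_norm_nonneg_of_vecMul_eq_smul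
          (fun k j hkj => hoff _ _ (Fin.succAbove_right_injective.ne hkj)) hre hv k
    have hui := eq_of_transGen_of_sum_mul_nonneg hoff hcol hle hsub
      (hirr _ _ (i.succAbove_ne j₀)) (by simp [u])
    simp only [u, Fin.insertNth_apply_same] at hui
    linarith
  refine ⟨hspec, fun hdet => (hspec 0 (isRoot_charpoly_zero_of_det_eq_zero ?_)).false⟩
  exact (Complex.ofRealHom.map_det B).symm.trans (by rw [hdet, map_zero])
end

section
/- Let H be an irreducible transition-rate matrix with column sums zero, n = N+1 states. For each i, let a^i_1,…,a^i_N be the eigenvalues of −H_{\{i\}} and let b_1,…,b_N be the nonzero eigenvalues of −H. Then ∏_{k=1}^N b_k = ∑_{i=1}^n ∏_{k=1}^N a^i_k, and the stationary distribution π of the Markov chain with generator Hᵀ satisfies π_i = ∏_{k=1}^N (a^i_k / b_k). -/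
/-!
Write `A = -H` over `ℂ`. Differentiating `det (X - A)` column by column shows that the derivative
of the characteristic polynomial is the trace of the adjugate of the characteristic matrix, i.e. the
sum of the characteristic polynomials of the principal `N × N` submatrices. Evaluating at `0`
gives `∏ₖ bₖ = tr (adj A) = ∑ᵢ ∏ₖ aᵢₖ`.

Since the columns of `A` sum to zero, `det A = 0`; since `tr (adj A) ≠ 0`, some principal
`N × N` minor is nonzero, so both kernels of `A` are one-dimensional. The rows of `adj A` lie in
the left kernel, spanned by `(1, …, 1)`, so each row of `adj A` is constant; its columns lie in
the right kernel, so they all equal the diagonal `(∏ₖ aᵢₖ)ᵢ` and `π` is proportional to it. The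
normalisations `∑ π = 1` and `tr (adj A) = ∏ₖ bₖ` fix the factor.
-/

open Polynomial Matrix

theorem Polynomial.eval_zero_prod_X_sub_C {R ι : Type*} [CommRing R] [Fintype ι]
    (f : ι → R) : (∏ k, (X - C (f k))).eval 0 = (-1) ^ Fintype.card ι * ∏ k, f k := by
  simp [eval_prod, Finset.prod_neg]

namespace Matrix

section Charpoly

variable {R : Type*} [CommRing R]

theorem derivative_det {n : Type*} [Fintype n] [DecidableEq n] (M : Matrix n n R[X]) :
    derivative M.det = ∑ j, (M.updateCol j fun i => derivative (M i j)).det := by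
  simp only [det_apply, map_sum, Units.smul_def, map_zsmul, derivative_prod_finset,
    Finset.smul_sum]
  rw [Finset.sum_comm]
  refine Finset.sum_congr rfl fun j _ => Finset.sum_congr rfl fun σ _ => ?_
  rw [← Finset.mul_prod_erase _ _ (Finset.mem_univ j), updateCol_self, mul_comm]
  congr 2
  exact Finset.prod_congr rfl fun i hi => (updateCol_ne (Finset.ne_of_mem_erase hi)).symm

theorem det_updateCol_single_self {n : Type*} [Fintype n] [DecidableEq n] (M : Matrix n n R)
    (j : n) : (M.updateCol j (Pi.single j 1)).det = M.adjugate j j := by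
  rw [← transpose_transpose M, updateCol_transpose, det_transpose, ← adjugate_apply,
    ← adjugate_transpose, transpose_apply, transpose_transpose]

theorem derivative_charpoly {n : Type*} [Fintype n] [DecidableEq n] (M : Matrix n n R) :
    derivative M.charpoly = (charmatrix M).adjugate.trace := by
  rw [charpoly, derivative_det]
  refine Finset.sum_congr rfl fun j _ => ?_
  have hderiv : (fun i => derivative (charmatrix M i j)) = Pi.single j 1 := by
    funext i
    rcases eq_or_ne i j with rfl | hij
    · simp [charmatrix_apply_eq]
    · simp [hij]
  rw [hderiv, det_updateCol_single_self, diag_apply]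

theorem charmatrix_submatrix {n m : Type*} [Fintype n] [DecidableEq n] [Fintype m]
    [DecidableEq m] (M : Matrix n n R) {f : m → n} (hf : Function.Injective f) :
    (charmatrix M).submatrix f f = charmatrix (M.submatrix f f) := by
  ext i j
  rcases eq_or_ne i j with rfl | hij
  · simp [charmatrix_apply_eq]
  · simp [charmatrix_apply_ne _ _ _ hij, charmatrix_apply_ne _ _ _ (hf.ne hij)]

theorem adjugate_fin_succ_apply_self {n : ℕ} (M : Matrix (Fin (n + 1)) (Fin (n + 1)) R)
    (j : Fin (n + 1)) : M.adjugate j j = (M.submatrix j.succAbove j.succAbove).det := by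
  rw [adjugate_fin_succ_eq_det_submatrix, Even.neg_one_pow ⟨j, rfl⟩, one_mul]

theorem derivative_charpoly_eval_zero {n : ℕ} (M : Matrix (Fin (n + 1)) (Fin (n + 1)) R) :
    (derivative M.charpoly).eval 0 = (-1) ^ n * M.adjugate.trace := by
  rw [derivative_charpoly, trace, trace, eval_finsetSum, Finset.mul_sum]
  refine Finset.sum_congr rfl fun j _ => ?_
  rw [diag_apply, diag_apply, adjugate_fin_succ_apply_self, adjugate_fin_succ_apply_self,
    charmatrix_submatrix _ Fin.succAbove_right_injective, ← charpoly,
    det_eq_sign_charpoly_coeff, Fintype.card_fin, coeff_zero_eq_eval_zero, ← mul_assoc,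
    ← mul_pow, neg_one_mul, neg_neg, one_pow, one_mul]

end Charpoly

theorem det_eq_prod_of_charpoly_eq_prod_X_sub_C {R n : Type*} [CommRing R] [Fintype n]
    [DecidableEq n] {M : Matrix n n R} {f : n → R} (h : M.charpoly = ∏ k, (X - C (f k))) :
    M.det = ∏ k, f k := by
  rw [det_eq_sign_charpoly_coeff, h, coeff_zero_eq_eval_zero, eval_zero_prod_X_sub_C,
    ← mul_assoc, ← mul_pow, neg_one_mul, neg_neg, one_pow, one_mul]

theorem eq_zero_of_mulVec_eq_zero_of_apply_eq_zero {R : Type*} [CommRing R] [IsDomain R]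
    {n : ℕ} {A : Matrix (Fin (n + 1)) (Fin (n + 1)) R} {j : Fin (n + 1)}
    (hA : (A.submatrix j.succAbove j.succAbove).det ≠ 0) {v : Fin (n + 1) → R}
    (hv : A *ᵥ v = 0) (hvj : v j = 0) : v = 0 := by
  have hrestrict : A.submatrix j.succAbove j.succAbove *ᵥ (v ∘ j.succAbove) = 0 := by
    funext k
    have hk := congrFun hv (j.succAbove k)
    simp only [mulVec, dotProduct, Fin.sum_univ_succAbove _ j, hvj, mul_zero, zero_add]
      at hk
    simpa [mulVec, dotProduct] using hk
  have hzero := eq_zero_of_mulVec_eq_zero hA hrestrict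
  funext l
  rcases eq_or_ne l j with rfl | hl
  · exact hvj
  · obtain ⟨k, rfl⟩ := Fin.exists_succAbove_eq hl
    exact congrFun hzero k

section Kernel

variable {K : Type*} [Field K] {n : ℕ} {A : Matrix (Fin (n + 1)) (Fin (n + 1)) K}
  {j : Fin (n + 1)}

theorem eq_smul_of_mulVec_eq_zero (hA : (A.submatrix j.succAbove j.succAbove).det ≠ 0)
    {x y : Fin (n + 1) → K} (hx : A *ᵥ x = 0) (hxj : x j ≠ 0) (hy : A *ᵥ y = 0) :
    y = (y j / x j) • x := by
  rw [← sub_eq_zero]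
  refine eq_zero_of_mulVec_eq_zero_of_apply_eq_zero hA ?_ ?_
  · rw [mulVec_sub, mulVec_smul, hx, hy, smul_zero, sub_zero]
  · simp [hxj]

theorem eq_smul_of_vecMul_eq_zero (hA : (A.submatrix j.succAbove j.succAbove).det ≠ 0)
    {x y : Fin (n + 1) → K} (hx : x ᵥ* A = 0) (hxj : x j ≠ 0) (hy : y ᵥ* A = 0) :
    y = (y j / x j) • x := by
  refine eq_smul_of_mulVec_eq_zero (A := Aᵀ) ?_ ?_ hxj ?_
  · rwa [← transpose_submatrix, det_transpose]
  · rwa [mulVec_transpose]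
  · rwa [mulVec_transpose]

theorem sum_mul_adjugate_apply_self (hcol : ∀ j, ∑ i, A i j = 0)
    (htrace : A.adjugate.trace ≠ 0) {v : Fin (n + 1) → K} (hv : A *ᵥ v = 0) (i : Fin (n + 1)) :
    (∑ k, v k) * A.adjugate i i = A.adjugate.trace * v i := by
  obtain ⟨j, -, hj⟩ := Finset.exists_ne_zero_of_sum_ne_zero htrace
  have hminor := hj
  rw [diag_apply, adjugate_fin_succ_apply_self] at hminor
  have hones : (fun _ => 1) ᵥ* A = 0 := by
    funext l
    simpa [vecMul, dotProduct] using hcol l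
  have hdet : A.det = 0 := exists_vecMul_eq_zero_iff.mp ⟨_, one_ne_zero, hones⟩
  have hrow (i k : Fin (n + 1)) : A.adjugate i k = A.adjugate i i := by
    have hi : A.adjugate i ᵥ* A = 0 := by
      funext l
      simpa [hdet, vecMul, dotProduct, mul_apply] using congrFun (congrFun (adjugate_mul A) i) l
    have hsmul := eq_smul_of_vecMul_eq_zero hminor hones one_ne_zero hi
    rw [congrFun hsmul k, congrFun hsmul i]
    rfl
  have hdiag : A *ᵥ (fun i => A.adjugate i i) = 0 := by
    funext l
    simpa [← hrow _ j, hdet, mulVec, dotProduct, mul_apply] using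
      congrFun (congrFun (mul_adjugate A) l) j
  have hv_eq := eq_smul_of_mulVec_eq_zero hminor hdiag hj hv
  rw [trace, hv_eq]
  simp only [Pi.smul_apply, smul_eq_mul, diag_apply, ← Finset.mul_sum]
  ring

end Kernel

end Matrix

theorem stationary_distribution_eigenvalue_formula_general
    (N : ℕ) (H : Matrix (Fin (N + 1)) (Fin (N + 1)) ℝ)
    (hcol : ∀ j, ∑ i, H i j = 0)
    (a : Fin (N + 1) → Fin N → ℂ) (b : Fin N → ℂ)
    (ha : ∀ i : Fin (N + 1),
      (((-H).submatrix i.succAbove i.succAbove).map (Complex.ofReal ·)).charpoly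
        = ∏ k, (X - C (a i k)))
    (hb : ((-H).map (Complex.ofReal ·)).charpoly = X * ∏ k, (X - C (b k)))
    (hb0 : ∀ k, b k ≠ 0) :
    (∏ k, b k) = ∑ i, ∏ k, a i k
    ∧ ∀ π : Fin (N + 1) → ℝ, (∀ i, 0 ≤ π i) → (∑ i, π i) = 1 →
        H.mulVec π = 0 → ∀ i, (π i : ℂ) = ∏ k, a i k / b k := by
  set A := (-H).map (Complex.ofReal ·)
  have hdiag (i : Fin (N + 1)) : A.adjugate i i = ∏ k, a i k := by
    rw [adjugate_fin_succ_apply_self, submatrix_map]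
    exact det_eq_prod_of_charpoly_eq_prod_X_sub_C (ha i)
  have htrace : A.adjugate.trace = ∏ k, b k := by
    have h := derivative_charpoly_eval_zero A
    rw [hb, derivative_mul, derivative_X, one_mul, eval_add, eval_mul, eval_X, zero_mul,
      add_zero, eval_zero_prod_X_sub_C, Fintype.card_fin] at h
    exact (mul_left_cancel₀ (pow_ne_zero _ (neg_ne_zero.mpr one_ne_zero)) h).symm
  have hprod : ∏ k, b k ≠ 0 := Finset.prod_ne_zero_iff.mpr fun k _ => hb0 k
  refine ⟨by simp only [← htrace, trace, diag_apply, hdiag], fun π _ hπ1 hπ i => ?_⟩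
  have hcolA (j : Fin (N + 1)) : ∑ i, A i j = 0 := by
    simp [A, ← Complex.ofReal_sum, hcol]
  have hπA : A *ᵥ (fun i => (π i : ℂ)) = 0 := by
    funext l
    simpa [A, mulVec, dotProduct] using congrArg Complex.ofReal (congrFun hπ l)
  have key := sum_mul_adjugate_apply_self hcolA (htrace ▸ hprod) hπA i
  rw [← Complex.ofReal_sum, hπ1, Complex.ofReal_one, one_mul, hdiag, htrace] at key
  rw [Finset.prod_div_distrib, eq_div_iff hprod, mul_comm, key]

/-- For an irreducible transition-rate matrix `H` with `n = N+1` states, if `a^i_1,…,a^i_N`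
are the eigenvalues of `−H_{\{i\}}` and `b_1,…,b_N` the nonzero eigenvalues of `−H`, then
`∏_k b_k = ∑_i ∏_k a^i_k` and the stationary distribution satisfies
`π_i = ∏_k (a^i_k / b_k)`. -/
theorem stationary_distribution_eigenvalue_formula
    (N : ℕ) (H : Matrix (Fin (N + 1)) (Fin (N + 1)) ℝ)
    (hoff : ∀ i j, i ≠ j → 0 ≤ H i j)
    (hcol : ∀ j, ∑ i, H i j = 0)
    (hirr : ∀ i j : Fin (N + 1), i ≠ j → Relation.TransGen (fun a b => 0 < H b a) i j)
    (a : Fin (N + 1) → Fin N → ℂ) (b : Fin N → ℂ)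
    (ha : ∀ i : Fin (N + 1),
      (((-H).submatrix i.succAbove i.succAbove).map (Complex.ofReal ·)).charpoly
        = ∏ k, (X - C (a i k)))
    (hb : ((-H).map (Complex.ofReal ·)).charpoly = X * ∏ k, (X - C (b k)))
    (hb0 : ∀ k, b k ≠ 0) :
    (∏ k, b k) = ∑ i, ∏ k, a i k
    ∧ ∀ π : Fin (N + 1) → ℝ, (∀ i, 0 ≤ π i) → (∑ i, π i) = 1 →
        H.mulVec π = 0 → ∀ i, (π i : ℂ) = ∏ k, a i k / b k :=
  stationary_distribution_eigenvalue_formula_general N H hcol a b ha hb hb0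
end

section
/- Let H be an irreducible transition-rate matrix with n = N+1 states, let a = (a_1,…,a_N) be the eigenvalues of −H_{\{1\}} and b = (b_1,…,b_N) the nonzero eigenvalues of −H. Let s = (s₁,0,…,0) and define c_k(s) by c_0 = stationary vector and c_k(s) = (kI−H)^{-1}D(s)c_{k−1}(s). Then the total mass c̄_k(s) = ∑_{i=1}^n c_{k,i}(s) equals ((a)_k/(b)_k) · s₁^k/k!, where (a)_k = ∏_{i=1}^N a_i(a_i+1)⋯(a_i+k−1). -/
/-!
Summing the components of `(kI - H) c_k = s₁ c_{k-1,0} e₀` kills `H` (its columns sum to zero),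
so `k c̄_k = s₁ c_{k-1,0}`. Cramer's rule on the same system gives
`det (kI - H) · c_{k,0} = m_k · s₁ c_{k-1,0}` with `m_k` the `(0,0)` minor of `kI - H`, and both
are read off the characteristic polynomials: `det (kI - H) = k ∏ (b_i + k)`, `m_k = ∏ (a_i + k)`.
The determinant does not vanish for `k > 0` because `kI - H` is strictly diagonally dominant.
For `c_0`, replacing the first row of `-H` by ones gives a system with solution `c_0` and
right-hand side `e₀`, whose determinant is `∏ b_i` (the coefficient of `X` in the characteristic
polynomial) and whose `(0,0)` minor is `∏ a_i`. Unwinding the two recursions gives the formula.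
-/

open Polynomial Matrix Finset

namespace Matrix

variable {ι R : Type*} [Fintype ι] [DecidableEq ι] [CommRing R]

theorem sum_smul_one_add_mulVec {M : Matrix ι ι R} (hcol : ∀ j, ∑ i, M i j = 0) (x : R)
    (v : ι → R) : ∑ i, ((x • 1 + M) *ᵥ v) i = x * ∑ i, v i := by
  have hM : ∑ i, (M *ᵥ v) i = 0 := by
    simp only [mulVec, dotProduct]
    rw [Finset.sum_comm]
    simp [← Finset.sum_mul, hcol]
  simp [add_mulVec, smul_mulVec, Finset.sum_add_distrib, hM, Finset.mul_sum]

theorem det_eq_mul_det_updateRow_one {M : Matrix ι ι R} {y : R} (hcol : ∀ j, ∑ i, M i j = y)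
    (r : ι) : M.det = y * (M.updateRow r 1).det := by
  have hrows : ∑ k, (1 : R) • M k = y • 1 := by
    ext j
    rw [Finset.sum_apply]
    simpa using hcol j
  have h := det_updateRow_sum M r fun _ => 1
  rwa [hrows, det_updateRow_smul, one_smul, eq_comm] at h

theorem det_smul_one_add_eq_prod {M : Matrix ι ι R} {z : ι → R}
    (h : M.charpoly = ∏ i, (X - C (z i))) (x : R) :
    (x • 1 + M).det = ∏ i, (z i + x) := by
  have heval := congrArg (eval (-x)) h
  have hneg : scalar ι (-x) - M = -(x • 1 + M) := by
    ext i j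
    by_cases hij : i = j <;> simp [hij]; ring
  rw [eval_charpoly, hneg, det_neg, eval_prod] at heval
  have hprod : ∏ i, eval (-x) (X - C (z i)) = (-1) ^ Fintype.card ι * ∏ i, (z i + x) := by
    rw [← Finset.card_univ, ← Finset.prod_const, ← Finset.prod_mul_distrib]
    exact Finset.prod_congr rfl fun i _ => by simp; ring
  rw [hprod] at heval
  exact (isUnit_neg_one.pow _).mul_left_cancel heval

theorem det_smul_one_add_eq_mul_prod {n : ℕ} {M : Matrix (Fin (n + 1)) (Fin (n + 1)) R}
    {z : Fin n → R} (h : M.charpoly = X * ∏ i, (X - C (z i))) (x : R) :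
    (x • 1 + M).det = x * ∏ i, (z i + x) := by
  have h' : M.charpoly = ∏ i, (X - C ((Fin.cons 0 z : Fin (n + 1) → R) i)) := by
    simpa [Fin.prod_univ_succ] using h
  simpa [Fin.prod_univ_succ] using det_smul_one_add_eq_prod h' x

theorem det_mul_apply_zero_of_mulVec_eq_single {n : ℕ} {A : Matrix (Fin (n + 1)) (Fin (n + 1)) R}
    {v : Fin (n + 1) → R} {y : R} (h : A *ᵥ v = Pi.single 0 y) :
    A.det * v 0 = (A.submatrix (Fin.succAbove 0) (Fin.succAbove 0)).det * y := by
  have hadj := congrFun (congrArg (A.adjugate *ᵥ ·) h) 0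
  simp only [mulVec_mulVec, adjugate_mul, smul_mulVec, one_mulVec, Pi.smul_apply, smul_eq_mul,
    mulVec_single] at hadj
  simpa [adjugate_fin_succ_eq_det_submatrix] using hadj

theorem det_updateRow_one_mul_apply_zero {n : ℕ} {A : Matrix (Fin (n + 1)) (Fin (n + 1)) R}
    {v : Fin (n + 1) → R} (hv : A *ᵥ v = 0) (hsum : ∑ i, v i = 1) :
    (A.updateRow 0 1).det * v 0 = (A.submatrix (Fin.succAbove 0) (Fin.succAbove 0)).det := by
  have h : A.updateRow 0 1 *ᵥ v = Pi.single 0 1 := by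
    rw [updateRow_mulVec, hv, one_dotProduct, hsum]
    rfl
  simpa only [submatrix_updateRow_succAbove, mul_one] using
    det_mul_apply_zero_of_mulVec_eq_single h

theorem det_updateRow_smul_one_add_eq_prod {n : ℕ}
    {M : Matrix (Fin (n + 1)) (Fin (n + 1)) ℂ} {z : Fin n → ℂ} (hcol : ∀ j, ∑ i, M i j = 0)
    (h : M.charpoly = X * ∏ i, (X - C (z i))) (r : Fin (n + 1)) (x : ℂ) :
    ((x • 1 + M).updateRow r 1).det = ∏ i, (z i + x) := by
  have hpunct : ∀ x ≠ 0, ((x • 1 + M).updateRow r 1).det = ∏ i, (z i + x) := by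
    intro x hx
    have hcol' : ∀ j, ∑ i, (x • 1 + M) i j = x := fun j => by
      simp [sum_add_distrib, hcol, one_apply]
    have hdet := det_eq_mul_det_updateRow_one hcol' r
    rw [det_smul_one_add_eq_mul_prod h] at hdet
    exact (mul_left_cancel₀ hx hdet).symm
  -- cancelling `x` needs `x ≠ 0`; both sides are continuous, so the identity extends to `x = 0`
  exact congrFun (Continuous.ext_on (dense_compl_singleton 0) (by fun_prop) (by fun_prop) hpunct) x

theorem det_smul_one_sub_ne_zero {H : Matrix ι ι ℝ} (hoff : ∀ i j, i ≠ j → 0 ≤ H i j)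
    (hcol : ∀ j, ∑ i, H i j ≤ 0) {μ : ℝ} (hμ : 0 < μ) : (μ • 1 - H).det ≠ 0 := by
  refine det_ne_zero_of_sum_col_lt_diag fun k => ?_
  have hoffdiag : ∑ i ∈ univ.erase k, ‖(μ • 1 - H) i k‖ = ∑ i ∈ univ.erase k, H i k :=
    sum_congr rfl fun i hi => by
      simp [one_apply_ne (ne_of_mem_erase hi), abs_of_nonneg (hoff i k (ne_of_mem_erase hi))]
  have hsplit := sum_erase_add univ (fun i => H i k) (mem_univ k)
  rw [hoffdiag]
  calc ∑ i ∈ univ.erase k, H i k < μ - H k k := by linarith [hcol k]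
    _ ≤ ‖(μ • 1 - H) k k‖ := by simpa using le_abs_self (μ - H k k)

end Matrix

section RisingProd

variable {ι R : Type*} [Fintype ι] [CommRing R]

def risingProd (z : ι → R) (k : ℕ) : R := ∏ i, ∏ m ∈ range k, (z i + m)

theorem risingProd_succ (z : ι → R) (k : ℕ) :
    risingProd z (k + 1) = risingProd z k * ∏ i, (z i + k) := by
  simp only [risingProd, prod_range_succ, prod_mul_distrib]

theorem risingProd_ne_zero [IsDomain R] {z : ι → R} (hz : ∀ (m : ℕ) i, z i + m ≠ 0) (k : ℕ) :
    risingProd z k ≠ 0 :=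
  prod_ne_zero_iff.mpr fun i _ => prod_ne_zero_iff.mpr fun m _ => hz m i

theorem eq_risingProd_div_of_recurrence {K : Type*} [Field K] [CharZero K] {a b : ι → K} {s : K}
    {t u : ℕ → K} (hb : ∀ (m : ℕ) i, b i + m ≠ 0) (ht0 : t 0 = 1)
    (hu0 : u 0 * ∏ i, b i = ∏ i, a i) (ht : ∀ k : ℕ, (k + 1) * t (k + 1) = s * u k)
    (hu : ∀ k : ℕ,
      (k + 1) * (∏ i, (b i + (k + 1))) * u (k + 1) = (∏ i, (a i + (k + 1))) * (s * u k))
    (k : ℕ) : t k = risingProd a k / risingProd b k * s ^ k / k.factorial := by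
  have hu' : ∀ k, u k * risingProd b (k + 1) * k.factorial = risingProd a (k + 1) * s ^ k := by
    intro k
    induction k with
    | zero => simpa [risingProd] using hu0
    | succ k ih =>
      rw [risingProd_succ a (k + 1), risingProd_succ b (k + 1), Nat.factorial_succ]
      push_cast
      linear_combination (risingProd b (k + 1) * k.factorial) * hu k
        + (s * ∏ i, (a i + (k + 1))) * ih
  have ht' : t k * risingProd b k * k.factorial = risingProd a k * s ^ k := by
    cases k with
    | zero => simp [risingProd, ht0]
    | succ k =>
      rw [Nat.factorial_succ]
      push_cast
      linear_combination (risingProd b (k + 1) * k.factorial) * ht k + s * hu' k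
  have hfac : (k.factorial : K) ≠ 0 := Nat.cast_ne_zero.mpr k.factorial_ne_zero
  field_simp [risingProd_ne_zero hb k]
  linear_combination ht'

end RisingProd

theorem Matrix.ofReal_det {ι : Type*} [Fintype ι] [DecidableEq ι] (A : Matrix ι ι ℝ) :
    (A.det : ℂ) = (A.map (Complex.ofReal ·)).det :=
  RingHom.map_det Complex.ofRealHom A

theorem Matrix.map_ofReal_mulVec {m ι : Type*} [Fintype ι] (A : Matrix m ι ℝ) (w : ι → ℝ) :
    A.map (Complex.ofReal ·) *ᵥ (fun i => (w i : ℂ)) = fun i => ((A *ᵥ w) i : ℂ) :=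
  funext fun i => (RingHom.map_mulVec Complex.ofRealHom A w i).symm

theorem Matrix.map_ofReal_smul_one_sub {ι : Type*} [DecidableEq ι] (H : Matrix ι ι ℝ) (x : ℝ) :
    (x • 1 - H).map (Complex.ofReal ·) = (x : ℂ) • 1 + (-H).map (Complex.ofReal ·) := by
  ext i j
  by_cases hij : i = j <;> simp [hij, sub_eq_add_neg]

theorem add_ne_zero_of_charpoly_neg_eq {n : ℕ} {H : Matrix (Fin (n + 1)) (Fin (n + 1)) ℝ}
    (hoff : ∀ i j, i ≠ j → 0 ≤ H i j) (hcol : ∀ j, ∑ i, H i j ≤ 0) {b : Fin n → ℂ}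
    (hb : ((-H).map (Complex.ofReal ·)).charpoly = X * ∏ i, (X - C (b i))) {μ : ℝ} (hμ : 0 < μ)
    (i : Fin n) : b i + μ ≠ 0 := by
  intro hzero
  apply det_smul_one_sub_ne_zero hoff hcol hμ
  have h := ofReal_det (μ • 1 - H)
  rw [map_ofReal_smul_one_sub, det_smul_one_add_eq_mul_prod hb, prod_eq_zero (mem_univ i) hzero,
    mul_zero] at h
  exact_mod_cast h

theorem sum_eq_risingProd_of_recurrence {n : ℕ} {M : Matrix (Fin (n + 1)) (Fin (n + 1)) ℂ}
    {a b : Fin n → ℂ} (hcol : ∀ j, ∑ i, M i j = 0)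
    (ha : (M.submatrix (Fin.succAbove 0) (Fin.succAbove 0)).charpoly = ∏ i, (X - C (a i)))
    (hb : M.charpoly = X * ∏ i, (X - C (b i))) (hbm : ∀ (m : ℕ) i, b i + m ≠ 0) {s : ℂ}
    {v : ℕ → Fin (n + 1) → ℂ} (hv0 : M *ᵥ v 0 = 0) (hsum0 : ∑ i, v 0 i = 1)
    (hv : ∀ k : ℕ, (((k : ℂ) + 1) • 1 + M) *ᵥ v (k + 1) = Pi.single 0 (s * v k 0)) (k : ℕ) :
    ∑ i, v k i = risingProd a k / risingProd b k * s ^ k / k.factorial := by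
  have hdet : ∀ x : ℂ, (x • 1 + M).det = x * ∏ i, (b i + x) := det_smul_one_add_eq_mul_prod hb
  have hminor : ∀ x : ℂ, ((x • 1 + M).submatrix (Fin.succAbove 0) (Fin.succAbove 0)).det
      = ∏ i, (a i + x) := fun x => by
    have hsub : (x • 1 + M).submatrix (Fin.succAbove 0) (Fin.succAbove 0)
        = x • 1 + M.submatrix (Fin.succAbove 0) (Fin.succAbove 0) := by
      ext i j
      simp [one_apply]
    rw [hsub]
    exact det_smul_one_add_eq_prod ha x
  refine eq_risingProd_div_of_recurrence (t := fun k => ∑ i, v k i) (u := fun k => v k 0) hbm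
    hsum0 ?_ ?_ ?_ k
  · have h := det_updateRow_one_mul_apply_zero hv0 hsum0
    have hrow := det_updateRow_smul_one_add_eq_prod hcol hb 0 0
    have hminor0 := hminor 0
    simp only [zero_smul, zero_add, add_zero] at hrow hminor0
    rw [hrow, hminor0] at h
    linear_combination h
  · intro k
    have h := sum_smul_one_add_mulVec hcol ((k : ℂ) + 1) (v (k + 1))
    rw [hv, sum_pi_single'] at h
    simpa using h.symm
  · intro k
    have h := det_mul_apply_zero_of_mulVec_eq_single (hv k)
    rwa [hdet, hminor] at h

theorem refractory_total_mass_formula_general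
    (N : ℕ) (H : Matrix (Fin (N + 1)) (Fin (N + 1)) ℝ)
    (hoff : ∀ i j, i ≠ j → 0 ≤ H i j)
    (hcol : ∀ j, ∑ i, H i j = 0)
    (a b : Fin N → ℂ)
    (ha : (((-H).submatrix (0 : Fin (N + 1)).succAbove
        (0 : Fin (N + 1)).succAbove).map (Complex.ofReal ·)).charpoly
        = ∏ k, (X - C (a k)))
    (hb : ((-H).map (Complex.ofReal ·)).charpoly = X * ∏ k, (X - C (b k)))
    (hb0 : ∀ k, b k ≠ 0)
    (s₁ : ℝ) (c : ℕ → Fin (N + 1) → ℝ)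
    (hc0 : (∀ i, 0 ≤ c 0 i) ∧ (∑ i, c 0 i) = 1 ∧ H.mulVec (c 0) = 0)
    (hrec : ∀ k : ℕ, 1 ≤ k →
      ((k : ℝ) • (1 : Matrix (Fin (N + 1)) (Fin (N + 1)) ℝ) - H).mulVec (c k)
        = fun i => (if i = 0 then s₁ else 0) * c (k - 1) i) :
    ∀ k : ℕ, ((∑ i, c k i : ℝ) : ℂ)
      = ((∏ i, ∏ m ∈ Finset.range k, (a i + m))
          / ∏ i, ∏ m ∈ Finset.range k, (b i + m))
        * s₁ ^ k / (Nat.factorial k) := by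
  obtain ⟨-, hmass0, hstat⟩ := hc0
  have hcolM : ∀ j, ∑ i, ((-H).map (Complex.ofReal ·)) i j = 0 := fun j => by
    simpa using congrArg Complex.ofReal (hcol j)
  have hbm : ∀ (m : ℕ) i, b i + m ≠ 0 := by
    rintro (_ | m) i
    · simpa using hb0 i
    · exact_mod_cast add_ne_zero_of_charpoly_neg_eq hoff (fun j => (hcol j).le) hb
        (Nat.cast_pos.mpr m.succ_pos) i
  intro k
  push_cast
  refine sum_eq_risingProd_of_recurrence (v := fun k i => (c k i : ℂ)) hcolM ha hb hbm ?_
    (by exact_mod_cast hmass0) (fun k => ?_) k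
  · rw [map_ofReal_mulVec, neg_mulVec, hstat]
    ext i
    simp
  · have hmap : ((k : ℂ) + 1) • 1 + (-H).map (Complex.ofReal ·)
        = (((k + 1 : ℕ) : ℝ) • 1 - H).map (Complex.ofReal ·) := by
      rw [map_ofReal_smul_one_sub]
      push_cast
      rfl
    rw [hmap, map_ofReal_mulVec, hrec (k + 1) (by omega)]
    ext i
    by_cases hi : i = 0 <;> simp [hi]

/-- For a refractory promoter (active state `1`, here index `0`): with `a` the eigenvalues of
`−H_{\{1\}}`, `b` the nonzero eigenvalues of `−H`, `c₀` the stationary probability vector and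
`c_k = (kI−H)^{-1} D(s) c_{k-1}` for `s = (s₁,0,…,0)`, the total mass satisfies
`∑_i c_{k,i} = ((a)_k/(b)_k) · s₁^k/k!` where `(a)_k` is the product of rising factorials. -/
theorem refractory_total_mass_formula
    (N : ℕ) (H : Matrix (Fin (N + 1)) (Fin (N + 1)) ℝ)
    (hoff : ∀ i j, i ≠ j → 0 ≤ H i j)
    (hcol : ∀ j, ∑ i, H i j = 0)
    (hirr : ∀ i j : Fin (N + 1), i ≠ j → Relation.TransGen (fun a b => 0 < H b a) i j)
    (a b : Fin N → ℂ)
    (ha : (((-H).submatrix (0 : Fin (N + 1)).succAbove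
        (0 : Fin (N + 1)).succAbove).map (Complex.ofReal ·)).charpoly
        = ∏ k, (X - C (a k)))
    (hb : ((-H).map (Complex.ofReal ·)).charpoly = X * ∏ k, (X - C (b k)))
    (hb0 : ∀ k, b k ≠ 0)
    (s₁ : ℝ) (c : ℕ → Fin (N + 1) → ℝ)
    (hc0 : (∀ i, 0 ≤ c 0 i) ∧ (∑ i, c 0 i) = 1 ∧ H.mulVec (c 0) = 0)
    (hrec : ∀ k : ℕ, 1 ≤ k →
      ((k : ℝ) • (1 : Matrix (Fin (N + 1)) (Fin (N + 1)) ℝ) - H).mulVec (c k)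
        = fun i => (if i = 0 then s₁ else 0) * c (k - 1) i) :
    ∀ k : ℕ, ((∑ i, c k i : ℝ) : ℂ)
      = ((∏ i, ∏ m ∈ Finset.range k, (a i + m))
          / ∏ i, ∏ m ∈ Finset.range k, (b i + m))
        * s₁ ^ k / (Nat.factorial k) :=
  refractory_total_mass_formula_general N H hoff hcol a b ha hb hb0 s₁ c hc0 hrec
end

section
/- Let X be a random variable with values in [0,1] whose moments are E[X^k] = (a)_k/(b)_k where a,b ∈ ℂ^N have all entries with positive real parts and the moment sequence is real. If ν > 0 and M is a random variable with M | X ∼ Poisson(νX), then P(M = k) = (ν^k/k!) · ((a)_k/(b)_k) · ∑_{j=0}^∞ ((a+k)_j/(b+k)_j) · (−ν)^j / j!, i.e., P(M=k) = (ν^k/k!)((a)_k/(b)_k) · ₙFₙ[(a+k);(b+k);−ν]. -/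
/-!
Conditioning on `X`, `P(M = k) = E[(νX)^k e^{-νX}] / k!`. Since `|X| ≤ 1`, the exponential
series of `e^{-νX}` is dominated by that of `e^ν`, so it can be integrated termwise; this
writes `P(M = k)` through the moments `E[X^(k+j)] = (a)_{k+j}/(b)_{k+j}`, and the
factorisation `(a)_{k+j} = (a)_k (a+k)_j` turns the result into the hypergeometric series.
-/

open MeasureTheory Finset Nat

theorem prod_prod_range_add {ι R : Type*} [CommSemiring R] (s : Finset ι) (a : ι → R)
    (k j : ℕ) :
    ∏ i ∈ s, ∏ m ∈ range (k + j), (a i + m)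
      = (∏ i ∈ s, ∏ m ∈ range k, (a i + m)) * ∏ i ∈ s, ∏ m ∈ range j, (a i + k + m) := by
  rw [← prod_mul_distrib]
  refine prod_congr rfl fun i _ => ?_
  rw [prod_range_add]
  congr 1
  refine prod_congr rfl fun m _ => ?_
  push_cast
  ring

theorem hasSum_integral_pow_mul_exp {Ω : Type*} [MeasurableSpace Ω] {μ : Measure Ω}
    [IsFiniteMeasure μ] {X : Ω → ℝ} (hX : AEMeasurable X μ) (hX1 : ∀ᵐ ω ∂μ, |X ω| ≤ 1)
    (n : ℕ) (t : ℝ) :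
    HasSum (fun j => t ^ j / j ! * ∫ ω, X ω ^ (n + j) ∂μ)
      (∫ ω, X ω ^ n * Real.exp (t * X ω) ∂μ) := by
  simp_rw [← integral_const_mul]
  refine hasSum_integral_of_dominated_convergence (fun j _ => |t| ^ j / j !)
    (fun j => ((hX.pow_const _).const_mul _).aestronglyMeasurable) (fun j => ?_)
    (ae_of_all _ fun _ => Real.summable_pow_div_factorial |t|) (integrable_const _)
    (ae_of_all _ fun ω => ?_)
  · filter_upwards [hX1] with ω hω
    rw [norm_mul, Real.norm_eq_abs, Real.norm_eq_abs, abs_div, abs_pow, abs_pow,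
      Nat.abs_cast]
    exact mul_le_of_le_one_right (by positivity) (pow_le_one₀ (abs_nonneg _) hω)
  · rw [Real.exp_eq_exp_ℝ]
    refine ((NormedSpace.expSeries_div_hasSum_exp (t * X ω)).mul_left (X ω ^ n)).congr_fun
      fun j => ?_
    rw [mul_pow, pow_add]
    ring

theorem refractory_mRNA_distribution_general
    (N : ℕ) (a b : Fin N → ℂ)
    {Ω : Type*} [MeasurableSpace Ω] (ℙ : Measure Ω) [IsProbabilityMeasure ℙ]
    (X : Ω → ℝ) (hXm : Measurable X) (hX01 : ∀ ω, X ω ∈ Set.Icc (0 : ℝ) 1)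
    (hmom : ∀ k : ℕ, ((∫ ω, X ω ^ k ∂ℙ : ℝ) : ℂ)
      = (∏ i, ∏ m ∈ Finset.range k, (a i + m))
        / ∏ i, ∏ m ∈ Finset.range k, (b i + m))
    (ν : ℝ) (M : Ω → ℕ)
    (hcond : ∀ (k : ℕ) (A : Set ℝ), MeasurableSet A →
      (ℙ {ω | M ω = k ∧ X ω ∈ A}).toReal
        = ∫ ω in {ω | X ω ∈ A},
            (ν * X ω) ^ k * Real.exp (-(ν * X ω)) / (Nat.factorial k) ∂ℙ) :
    ∀ k : ℕ, ((ℙ {ω | M ω = k}).toReal : ℂ)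
      = (ν : ℂ) ^ k / (Nat.factorial k)
        * ((∏ i, ∏ m ∈ Finset.range k, (a i + m))
            / ∏ i, ∏ m ∈ Finset.range k, (b i + m))
        * ∑' j : ℕ,
            ((∏ i, ∏ m ∈ Finset.range j, (a i + k + m))
              / ∏ i, ∏ m ∈ Finset.range j, (b i + k + m))
            * (-(ν : ℂ)) ^ j / (Nat.factorial j) := by
  intro k
  have hP : (ℙ {ω | M ω = k}).toReal
      = ν ^ k / k ! * ∫ ω, X ω ^ k * Real.exp (-ν * X ω) ∂ℙ := by
    have h := hcond k Set.univ .univ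
    simp only [Set.mem_univ, and_true, Set.ofPred_true, Measure.restrict_univ] at h
    rw [h, ← integral_const_mul]
    congr 1 with ω
    rw [mul_pow, neg_mul]
    ring
  have hX1 : ∀ᵐ ω ∂ℙ, |X ω| ≤ 1 :=
    ae_of_all _ fun ω => abs_le.2 ⟨by linarith [(hX01 ω).1], (hX01 ω).2⟩
  rw [hP, ← (hasSum_integral_pow_mul_exp hXm.aemeasurable hX1 k (-ν)).tsum_eq,
    Complex.ofReal_mul, Complex.ofReal_tsum, mul_assoc]
  congr 1
  · push_cast
    rfl
  rw [← tsum_mul_left]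
  refine tsum_congr fun j => ?_
  rw [Complex.ofReal_mul, hmom, prod_prod_range_add, prod_prod_range_add, mul_div_mul_comm]
  push_cast
  ring

/-- If `X ∈ [0,1]` has (real-valued) moments `E[X^k] = (a)_k/(b)_k` for complex parameter
vectors `a, b` with positive real parts, and `M | X ∼ Poisson(νX)` with `ν > 0`, then
`P(M=k) = (ν^k/k!)·((a)_k/(b)_k)·ₙFₙ[(a+k);(b+k);−ν]`, the hypergeometric value being the
series `∑_j ((a+k)_j/(b+k)_j)(−ν)^j/j!`. -/
theorem refractory_mRNA_distribution
    (N : ℕ) (a b : Fin N → ℂ)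
    (hre : ∀ i, 0 < (a i).re ∧ 0 < (b i).re)
    {Ω : Type*} [MeasurableSpace Ω] (ℙ : Measure Ω) [IsProbabilityMeasure ℙ]
    (X : Ω → ℝ) (hXm : Measurable X) (hX01 : ∀ ω, X ω ∈ Set.Icc (0 : ℝ) 1)
    (hmom : ∀ k : ℕ, ((∫ ω, X ω ^ k ∂ℙ : ℝ) : ℂ)
      = (∏ i, ∏ m ∈ Finset.range k, (a i + m))
        / ∏ i, ∏ m ∈ Finset.range k, (b i + m))
    (ν : ℝ) (hν : 0 < ν) (M : Ω → ℕ) (hMm : Measurable M)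
    (hcond : ∀ (k : ℕ) (A : Set ℝ), MeasurableSet A →
      (ℙ {ω | M ω = k ∧ X ω ∈ A}).toReal
        = ∫ ω in {ω | X ω ∈ A},
            (ν * X ω) ^ k * Real.exp (-(ν * X ω)) / (Nat.factorial k) ∂ℙ) :
    ∀ k : ℕ, ((ℙ {ω | M ω = k}).toReal : ℂ)
      = (ν : ℂ) ^ k / (Nat.factorial k)
        * ((∏ i, ∏ m ∈ Finset.range k, (a i + m))
            / ∏ i, ∏ m ∈ Finset.range k, (b i + m))
        * ∑' j : ℕ,
            ((∏ i, ∏ m ∈ Finset.range j, (a i + k + m))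
              / ∏ i, ∏ m ∈ Finset.range j, (b i + k + m))
            * (-(ν : ℂ)) ^ j / (Nat.factorial j) :=
  refractory_mRNA_distribution_general N a b ℙ X hXm hX01 hmom ν M hcond
end
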